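/- arXiv:2502.06158 — 4 statements merged into one kernel-verified Lean document; each statement's English description precedes it below -/
import Mathlib

section
/- Let V be a complex vector space carrying two positive-semidefinite Hermitian sesquilinear forms a and s, with induced seminorms ‖v‖_a = a(v,v)^{1/2} and ‖v‖_s = s(v,v)^{1/2}. Let W ⊆ V be a subspace, U a complex vector space, π : V → U a linear map, Λ > 0 and F ≥ 0 real numbers, and ℓ : V → ℂ a map satisfying |ℓ(v)| ≤ F ‖v‖_s for all v ∈ V. Suppose u ∈ V satisfies a(u, v) = ℓ(v) for all v ∈ V, and u_W ∈ W satisfies a(u_W, w) = ℓ(w) for all w ∈ W. Assume moreover that π(u − u_W) = 0 and that every v ∈ V with πv = 0 satisfies ‖v‖_s² ≤ Λ^{-1} ‖v‖_a². Then ‖u − u_W‖_a ≤ F / √Λ. -/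
/-- Abstract form of the energy-norm estimate (4.1) of Theorem 4.1:
`‖u − u_W‖_a ≤ F / √Λ` for the Galerkin approximation `u_W` in a subspace `W`. -/
theorem stmt_2 {V U : Type*} [AddCommGroup V] [Module ℂ V] [AddCommGroup U] [Module ℂ U]
    (a s : V →ₗ[ℂ] V →ₛₗ[starRingEnd ℂ] ℂ)
    (ha_herm : ∀ v w, a v w = (starRingEnd ℂ) (a w v))
    (ha_pos : ∀ v, 0 ≤ (a v v).re)
    (hs_herm : ∀ v w, s v w = (starRingEnd ℂ) (s w v))
    (hs_pos : ∀ v, 0 ≤ (s v v).re)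
    (W : Submodule ℂ V) (π : V →ₗ[ℂ] U)
    (Λ F : ℝ) (hΛ : 0 < Λ) (hF : 0 ≤ F)
    (ℓ : V → ℂ) (hℓ : ∀ v, ‖ℓ v‖ ≤ F * Real.sqrt (s v v).re)
    (u : V) (hu : ∀ v, a u v = ℓ v)
    (uW : V) (huW : uW ∈ W) (huWeq : ∀ w ∈ W, a uW w = ℓ w)
    (hker : π (u - uW) = 0)
    (hspec : ∀ v, π v = 0 → (s v v).re ≤ Λ⁻¹ * (a v v).re) :
    Real.sqrt (a (u - uW) (u - uW)).re ≤ F / Real.sqrt Λ := by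

  set e := u - uW with he
  have h1 : a e uW = 0 := by
    rw [he, map_sub, LinearMap.sub_apply, hu uW, huWeq uW huW, sub_self]
  have h2 : a e e = (starRingEnd ℂ) (ℓ e) := by
    have h3 : a e e = a e u - a e uW := by
      conv_lhs => rw [show (e : V) = u - uW from he]
      exact map_sub (a e) u uW
    rw [h3, h1, sub_zero, ha_herm, hu]
  set X := (a e e).re with hXdef
  have hX0 : 0 ≤ X := ha_pos e
  have hssle : (s e e).re ≤ Λ⁻¹ * X := hspec e hker
  have hbound : X ≤ F * (Real.sqrt X / Real.sqrt Λ) := by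
    have c1 : X ≤ ‖a e e‖ := Complex.re_le_norm _
    have c2 : ‖a e e‖ = ‖ℓ e‖ := by
      rw [h2, Complex.norm_conj]
    have c3 : Real.sqrt (s e e).re ≤ Real.sqrt (Λ⁻¹ * X) := Real.sqrt_le_sqrt hssle
    have c4 : Real.sqrt (Λ⁻¹ * X) = Real.sqrt X / Real.sqrt Λ := by
      rw [Real.sqrt_mul (by positivity), Real.sqrt_inv]
      ring
    calc X ≤ ‖a e e‖ := c1
      _ = ‖ℓ e‖ := c2
      _ ≤ F * Real.sqrt (s e e).re := hℓ e
      _ ≤ F * (Real.sqrt X / Real.sqrt Λ) := by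
          rw [← c4]; exact mul_le_mul_of_nonneg_left c3 hF
  rcases eq_or_lt_of_le (Real.sqrt_nonneg X) with hz | hz
  · rw [← hz]; positivity
  · have : Real.sqrt X * Real.sqrt X ≤ (F / Real.sqrt Λ) * Real.sqrt X := by
      rw [Real.mul_self_sqrt hX0]
      calc X ≤ F * (Real.sqrt X / Real.sqrt Λ) := hbound
        _ = (F / Real.sqrt Λ) * Real.sqrt X := by ring
    exact le_of_mul_le_mul_right this hz
end

section
/- Let V and U be complex vector spaces, let a be a positive-semidefinite Hermitian sesquilinear form on V, let U carry a positive-semidefinite Hermitian sesquilinear form s, and let π : V → U be linear. Let C₀ ≥ 0. Suppose u ∈ V and φ ∈ U satisfy a(u, v) + s(πu, πv) = s(φ, πv) for all v ∈ V, and suppose there exists α ∈ V with πα = φ and a(α, α) ≤ C₀ · s(φ, φ). Then s(φ, φ)^{1/2} ≤ (√C₀ + 1) · ( a(u,u)^{1/2} + s(πu, πu)^{1/2} ). -/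
/-- Cauchy–Schwarz (real part form) for a PSD Hermitian sesquilinear form. -/
lemma cs_re {W : Type*} [AddCommGroup W] [Module ℂ W]
    (B : W →ₗ[ℂ] W →ₛₗ[starRingEnd ℂ] ℂ)
    (hB : ∀ v w, B v w = (starRingEnd ℂ) (B w v))
    (hpos : ∀ v, 0 ≤ (B v v).re) (x y : W) :
    (B x y).re ≤ Real.sqrt (B x x).re * Real.sqrt (B y y).re := by
  have hyx : (B y x).re = (B x y).re := by
    rw [hB y x]; simp [Complex.conj_re]
  have key : ∀ t : ℝ, 0 ≤ (B y y).re * (t * t) + 2 * (B x y).re * t + (B x x).re := by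
    intro t
    have e : B (x + (t:ℂ) • y) (x + (t:ℂ) • y)
        = B x x + (t:ℂ) * B x y + (t:ℂ) * B y x + ((t:ℂ) * (t:ℂ)) * B y y := by
      simp only [map_add, LinearMap.add_apply, map_smul, LinearMap.map_smulₛₗ,
        LinearMap.smul_apply, smul_eq_mul, Complex.conj_ofReal]
      ring
    have h := hpos (x + (t:ℂ) • y)
    rw [e] at h
    simp only [Complex.add_re, Complex.mul_re, Complex.mul_im, Complex.ofReal_re,
      Complex.ofReal_im, mul_zero, zero_mul, sub_zero, add_zero] at h
    rw [hyx] at h; ring_nf at h ⊢; linarith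
  have hd := discrim_le_zero key
  rw [discrim] at hd
  have hR2 : (B x y).re ^ 2 ≤ (B x x).re * (B y y).re := by nlinarith
  calc (B x y).re ≤ |(B x y).re| := le_abs_self _
    _ = Real.sqrt ((B x y).re ^ 2) := (Real.sqrt_sq_eq_abs _).symm
    _ ≤ Real.sqrt ((B x x).re * (B y y).re) := Real.sqrt_le_sqrt hR2
    _ = Real.sqrt (B x x).re * Real.sqrt (B y y).re := Real.sqrt_mul (hpos x) _

/-- Intermediate bound in the proof of Theorem 4.6:
`‖φ‖_s ≤ (√C₀ + 1)(‖u‖_a + ‖πu‖_s)`. -/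
theorem stmt_8 {V U : Type*} [AddCommGroup V] [Module ℂ V] [AddCommGroup U] [Module ℂ U]
    (a : V →ₗ[ℂ] V →ₛₗ[starRingEnd ℂ] ℂ)
    (ha_herm : ∀ v w, a v w = (starRingEnd ℂ) (a w v))
    (ha_pos : ∀ v, 0 ≤ (a v v).re)
    (s : U →ₗ[ℂ] U →ₛₗ[starRingEnd ℂ] ℂ)
    (hs_herm : ∀ v w, s v w = (starRingEnd ℂ) (s w v))
    (hs_pos : ∀ v, 0 ≤ (s v v).re)
    (π : V →ₗ[ℂ] U) (C₀ : ℝ) (hC₀ : 0 ≤ C₀)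
    (u : V) (φ : U)
    (hcorr : ∀ v : V, a u v + s (π u) (π v) = s φ (π v))
    (α : V) (hπα : π α = φ) (hα : (a α α).re ≤ C₀ * (s φ φ).re) :
    Real.sqrt (s φ φ).re
      ≤ (Real.sqrt C₀ + 1) * (Real.sqrt (a u u).re + Real.sqrt (s (π u) (π u)).re) := by
  set S := Real.sqrt (s φ φ).re with hS
  set Au := Real.sqrt (a u u).re with hAu
  set P := Real.sqrt (s (π u) (π u)).re with hP
  have hSn : 0 ≤ S := Real.sqrt_nonneg _
  have hAun : 0 ≤ Au := Real.sqrt_nonneg _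
  have hPn : 0 ≤ P := Real.sqrt_nonneg _
  have hSsq : S ^ 2 = (s φ φ).re := Real.sq_sqrt (hs_pos φ)
  -- plug v = α into the corrector identity
  have hid := hcorr α
  rw [hπα] at hid
  have hre : (a u α).re + (s (π u) φ).re = (s φ φ).re := by
    have := congrArg Complex.re hid
    simpa using this
  -- bound each term
  have h1 : (a u α).re ≤ Au * (Real.sqrt C₀ * S) := by
    calc (a u α).re ≤ Real.sqrt (a u u).re * Real.sqrt (a α α).re :=
          cs_re a ha_herm ha_pos u α
      _ ≤ Au * Real.sqrt (C₀ * (s φ φ).re) := by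
          apply mul_le_mul_of_nonneg_left (Real.sqrt_le_sqrt hα) hAun
      _ = Au * (Real.sqrt C₀ * S) := by rw [Real.sqrt_mul hC₀]
  have h2 : (s (π u) φ).re ≤ P * S := cs_re s hs_herm hs_pos (π u) φ
  have hmain : S ^ 2 ≤ (Real.sqrt C₀ * Au + P) * S := by
    rw [hSsq]; nlinarith
  have hfin : S ≤ Real.sqrt C₀ * Au + P := by
    rcases eq_or_lt_of_le hSn with h0 | h0
    · rw [← h0]; positivity
    · have := (mul_le_mul_iff_of_pos_right h0).mp (by nlinarith : S * S ≤ (Real.sqrt C₀ * Au + P) * S)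
      exact this
  have hsc : 0 ≤ Real.sqrt C₀ := Real.sqrt_nonneg _
  nlinarith [hfin]
end

section
/- Let V be a complex inner product space with inner product ⟨·,·⟩ (linear in the first argument) and norm ‖·‖, and let a be a Hermitian sesquilinear form on V (so a(v, v) ∈ ℝ for all v). Let ε > 0 and Δt > 0 be real numbers and let e, e′, y ∈ V satisfy the identity a( (e + e′)/2 , e + e′ ) = (i ε / Δt) ⟨ e − e′ , e + e′ ⟩ + i ε ⟨ y , e + e′ ⟩. Then ‖e‖² − ‖e′‖² ≤ Δt · ‖y‖ · ‖e + e′‖. -/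
open scoped InnerProductSpace

/-- The L²-stability step in the proof of Theorem 5.3 for the Crank–Nicolson CEM scheme.
(The paper's inner product `⟨p, q⟩`, linear in the first argument, is rendered as
Mathlib's `⟪q, p⟫_ℂ`, which is linear in the second argument.) -/
theorem stmt_11 {V : Type*} [NormedAddCommGroup V] [InnerProductSpace ℂ V]
    (a : V →ₗ[ℂ] V →ₛₗ[starRingEnd ℂ] ℂ)
    (ha_herm : ∀ v w, a v w = (starRingEnd ℂ) (a w v))
    (ε Δt : ℝ) (hε : 0 < ε) (hΔt : 0 < Δt)
    (e e' y : V)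
    (h : a (((1 : ℂ) / 2) • (e + e')) (e + e')
        = Complex.I * (ε : ℂ) / (Δt : ℂ) * ⟪e + e', e - e'⟫_ℂ
          + Complex.I * (ε : ℂ) * ⟪e + e', y⟫_ℂ) :
    ‖e‖ ^ 2 - ‖e'‖ ^ 2 ≤ Δt * ‖y‖ * ‖e + e'‖ := by
  set s := e + e' with hs
  set c1 : ℂ := ⟪s, e - e'⟫_ℂ with hc1
  set c2 : ℂ := ⟪s, y⟫_ℂ with hc2
  -- LHS of h is real
  have hlhs : (a (((1 : ℂ) / 2) • s) s).im = 0 := by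
    have h0 : (a s s).im = 0 := by
      have := congrArg Complex.im (ha_herm s s)
      simp [Complex.conj_im] at this
      linarith
    have : a (((1 : ℂ) / 2) • s) s = ((1 : ℂ)/2) * a s s := by
      simp [map_smul]
    rw [this]
    simp [Complex.mul_im, h0]
  -- rewrite RHS
  have hrhs : (Complex.I * (ε : ℂ) / (Δt : ℂ) * c1 + Complex.I * (ε : ℂ) * c2).im
      = (ε / Δt) * c1.re + ε * c2.re := by
    have hΔt' : (Δt : ℂ) ≠ 0 := by exact_mod_cast hΔt.ne'
    have : Complex.I * (ε : ℂ) / (Δt : ℂ) * c1 + Complex.I * (ε : ℂ) * c2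
        = ((ε / Δt : ℝ) : ℂ) * (Complex.I * c1) + ((ε : ℝ) : ℂ) * (Complex.I * c2) := by
      push_cast
      field_simp
    rw [this]
    simp [Complex.add_im, Complex.mul_im, Complex.mul_re]
  have him : (ε / Δt) * c1.re + ε * c2.re = 0 := by
    rw [← hrhs, ← h, hlhs]
  -- c1.re = ‖e‖^2 - ‖e'‖^2
  have hc1re : c1.re = ‖e‖ ^ 2 - ‖e'‖ ^ 2 := by
    have : c1 = ⟪e, e⟫_ℂ - ⟪e, e'⟫_ℂ + (⟪e', e⟫_ℂ - ⟪e', e'⟫_ℂ) := by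
      rw [hc1, hs, inner_add_left, inner_sub_right, inner_sub_right]
    have hconj : (⟪e', e⟫_ℂ).re = (⟪e, e'⟫_ℂ).re := by
      rw [← inner_conj_symm e e']
      exact (Complex.conj_re _).symm
    rw [this]
    simp only [Complex.add_re, Complex.sub_re, hconj]
    have h1 : (⟪e, e⟫_ℂ).re = ‖e‖ ^ 2 := by
      rw [inner_self_eq_norm_sq_to_K (𝕜 := ℂ) e]
      simp [← Complex.ofReal_pow]
    have h2 : (⟪e', e'⟫_ℂ).re = ‖e'‖ ^ 2 := by
      rw [inner_self_eq_norm_sq_to_K (𝕜 := ℂ) e']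
      simp [← Complex.ofReal_pow]
    rw [h1, h2]; ring
  -- bound c2.re
  have hbound : -c2.re ≤ ‖s‖ * ‖y‖ := by
    have h1 : -c2.re ≤ |c2.re| := neg_le_abs _
    have h2 : |c2.re| ≤ ‖c2‖ := Complex.abs_re_le_norm c2
    have h3 : ‖c2‖ ≤ ‖s‖ * ‖y‖ := norm_inner_le_norm s y
    linarith [neg_le_abs c2.re]
  have key : ‖e‖ ^ 2 - ‖e'‖ ^ 2 = -Δt * c2.re := by
    have hΔt' : Δt ≠ 0 := hΔt.ne'
    rw [hc1re] at him
    field_simp at him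
    nlinarith [him]
  rw [key]
  have : -Δt * c2.re = Δt * (-c2.re) := by ring
  rw [this]
  calc Δt * (-c2.re) ≤ Δt * (‖s‖ * ‖y‖) := by
        exact mul_le_mul_of_nonneg_left hbound hΔt.le
    _ = Δt * ‖y‖ * ‖e + e'‖ := by rw [hs]; ring
end

section
/- Let d ∈ ℕ, let Ω ⊆ ℝ^d be a measurable set, let ε > 0 be real, let V, μ̃ : Ω → ℝ be nonnegative measurable functions, let S ⊆ Ω be a measurable set, let η : Ω → ℝ be differentiable with 0 ≤ η(x) ≤ 1 and (ε²/2)‖∇η(x)‖² ≤ μ̃(x) for all x ∈ Ω, with η(x) = 1 and ∇η(x) = 0 for all x ∈ S, and let ψ : Ω → ℂ be differentiable. Assume that (ε²/2)‖∇ψ‖² + V|ψ|², μ̃|ψ|², and (ε²/2)‖∇((1−η)ψ)‖² + V|(1−η)ψ|² are integrable on Ω. Then ∫_Ω (ε²/2)‖∇((1−η)ψ)(x)‖² + V(x)|(1−η(x))ψ(x)|² dx ≤ 2 ∫_{Ω∖S} (ε²/2)‖∇ψ(x)‖² + V(x)|ψ(x)|² dx + 2 ∫_{Ω∖S} μ̃(x)|ψ(x)|²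 dx. -/
open MeasureTheory

set_option maxHeartbeats 2000000
set_option synthInstance.maxHeartbeats 1000000

/-- The cutoff estimate (4.6) in Step 1 of the proof of Theorem 4.4:
`‖(1−η)ψ‖_a² ≤ 2(‖ψ‖_{a(Ω∖S)}² + ‖ψ‖_{s(Ω∖S)}²)`. -/
theorem stmt_12 (d : ℕ) (Ω : Set (EuclideanSpace ℝ (Fin d))) (hΩ : MeasurableSet Ω)
    (ε : ℝ) (hε : 0 < ε)
    (Vp μ : EuclideanSpace ℝ (Fin d) → ℝ)
    (hVmeas : Measurable Vp) (hVpos : ∀ x, 0 ≤ Vp x)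
    (hμmeas : Measurable μ) (hμpos : ∀ x, 0 ≤ μ x)
    (S : Set (EuclideanSpace ℝ (Fin d))) (hS : MeasurableSet S) (hSΩ : S ⊆ Ω)
    (η : EuclideanSpace ℝ (Fin d) → ℝ) (hη : Differentiable ℝ η)
    (hη01 : ∀ x ∈ Ω, 0 ≤ η x ∧ η x ≤ 1)
    (hηgrad : ∀ x ∈ Ω, ε ^ 2 / 2 * ‖fderiv ℝ η x‖ ^ 2 ≤ μ x)
    (hηS : ∀ x ∈ S, η x = 1) (hηSgrad : ∀ x ∈ S, fderiv ℝ η x = 0)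
    (ψ : EuclideanSpace ℝ (Fin d) → ℂ) (hψ : Differentiable ℝ ψ)
    (hint1 : IntegrableOn
      (fun x => ε ^ 2 / 2 * ‖fderiv ℝ ψ x‖ ^ 2 + Vp x * ‖ψ x‖ ^ 2) Ω)
    (hint2 : IntegrableOn (fun x => μ x * ‖ψ x‖ ^ 2) Ω)
    (hint3 : IntegrableOn
      (fun x => ε ^ 2 / 2 * ‖fderiv ℝ (fun y => ((1 - η y : ℝ) : ℂ) * ψ y) x‖ ^ 2
        + Vp x * ‖((1 - η x : ℝ) : ℂ) * ψ x‖ ^ 2) Ω) :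
    (∫ x in Ω, (ε ^ 2 / 2 * ‖fderiv ℝ (fun y => ((1 - η y : ℝ) : ℂ) * ψ y) x‖ ^ 2
        + Vp x * ‖((1 - η x : ℝ) : ℂ) * ψ x‖ ^ 2))
      ≤ 2 * (∫ x in Ω \ S, (ε ^ 2 / 2 * ‖fderiv ℝ ψ x‖ ^ 2 + Vp x * ‖ψ x‖ ^ 2))
        + 2 * (∫ x in Ω \ S, μ x * ‖ψ x‖ ^ 2) := by
  -- derivative formula for the product
  have hFd : ∀ x, HasFDerivAt (fun y => ((1 - η y : ℝ) : ℂ) * ψ y)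
      (((1 - η x : ℝ) : ℂ) • fderiv ℝ ψ x
        + ψ x • (Complex.ofRealCLM.comp (-(fderiv ℝ η x)))) x := by
    intro x
    have h1 : HasFDerivAt (fun y => ((1 - η y : ℝ) : ℂ))
        (Complex.ofRealCLM.comp (-(fderiv ℝ η x))) x :=
      Complex.ofRealCLM.hasFDerivAt.comp x (((hη x).hasFDerivAt).const_sub 1)
    exact h1.mul (hψ x).hasFDerivAt
  have hF : ∀ x, fderiv ℝ (fun y => ((1 - η y : ℝ) : ℂ) * ψ y) x
      = ((1 - η x : ℝ) : ℂ) • fderiv ℝ ψ x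
        + ψ x • (Complex.ofRealCLM.comp (-(fderiv ℝ η x))) := fun x => (hFd x).fderiv
  set g1 : EuclideanSpace ℝ (Fin d) → ℝ := fun x =>
    ε ^ 2 / 2 * ‖fderiv ℝ ψ x‖ ^ 2 + Vp x * ‖ψ x‖ ^ 2 with hg1
  set g2 : EuclideanSpace ℝ (Fin d) → ℝ := fun x => μ x * ‖ψ x‖ ^ 2 with hg2
  set g3 : EuclideanSpace ℝ (Fin d) → ℝ := fun x =>
    ε ^ 2 / 2 * ‖fderiv ℝ (fun y => ((1 - η y : ℝ) : ℂ) * ψ y) x‖ ^ 2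
      + Vp x * ‖((1 - η x : ℝ) : ℂ) * ψ x‖ ^ 2 with hg3
  have hzeroS : ∀ x ∈ S, g3 x = 0 := by
    intro x hx
    have h2 := hF x
    rw [hηS x hx, hηSgrad x hx] at h2
    have h0 : ((1 - 1 : ℝ) : ℂ) = 0 := by norm_num
    have hc0 : Complex.ofRealCLM.comp (-(0 : EuclideanSpace ℝ (Fin d) →L[ℝ] ℝ)) = 0 := by
      rw [neg_zero, ContinuousLinearMap.comp_zero]
    have h4 : ψ x • (0 : EuclideanSpace ℝ (Fin d) →L[ℝ] ℂ) = 0 := by ext v; simp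
    have h5 : (0 : ℂ) • fderiv ℝ ψ x = 0 := by ext v; simp
    rw [h0, hc0, h5, h4, add_zero] at h2
    simp only [hg3, h2, hηS x hx]
    norm_num
  have hdm : MeasurableSet (Ω \ S) := hΩ.diff hS
  have hsplit : (∫ x in Ω, g3 x) = ∫ x in Ω \ S, g3 x := by
    have hunion : (Ω \ S) ∪ S = Ω := Set.diff_union_of_subset hSΩ
    have h := setIntegral_union (f := g3) (μ := volume) disjoint_sdiff_self_left hS
      (hint3.mono_set Set.diff_subset) (hint3.mono_set hSΩ)
    rw [hunion, setIntegral_eq_zero_of_forall_eq_zero hzeroS, add_zero] at h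
    exact h
  have hpt : ∀ x ∈ Ω \ S, g3 x ≤ 2 * g1 x + 2 * g2 x := by
    intro x hx
    obtain ⟨h0, h1⟩ := hη01 x hx.1
    have hμx := hηgrad x hx.1
    set a := ‖fderiv ℝ ψ x‖
    set b := ‖ψ x‖
    set c := ‖fderiv ℝ η x‖
    have ha : 0 ≤ a := norm_nonneg _
    have hb : 0 ≤ b := norm_nonneg _
    have hc : 0 ≤ c := norm_nonneg _
    have hcomp : ‖Complex.ofRealCLM.comp (-(fderiv ℝ η x))‖ ≤ c := by
      refine ContinuousLinearMap.opNorm_le_bound _ hc (fun v => ?_)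
      have : ‖(Complex.ofRealCLM.comp (-(fderiv ℝ η x))) v‖ = ‖fderiv ℝ η x v‖ := by
        simp
      rw [this]; exact (fderiv ℝ η x).le_opNorm v
    have hnorm : ‖fderiv ℝ (fun y => ((1 - η y : ℝ) : ℂ) * ψ y) x‖ ≤ a + b * c := by
      rw [hF x]
      calc ‖((1 - η x : ℝ) : ℂ) • fderiv ℝ ψ x
            + ψ x • (Complex.ofRealCLM.comp (-(fderiv ℝ η x)))‖
          ≤ ‖((1 - η x : ℝ) : ℂ) • fderiv ℝ ψ x‖
            + ‖ψ x • (Complex.ofRealCLM.comp (-(fderiv ℝ η x)))‖ := norm_add_le _ _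
        _ = ‖((1 - η x : ℝ) : ℂ)‖ * a
            + b * ‖Complex.ofRealCLM.comp (-(fderiv ℝ η x))‖ := by
            rw [norm_smul (((1 - η x : ℝ) : ℂ)) (fderiv ℝ ψ x), norm_smul (ψ x) (Complex.ofRealCLM.comp (-(fderiv ℝ η x)))]
        _ ≤ 1 * a + b * c := by
            have : ‖((1 - η x : ℝ) : ℂ)‖ = 1 - η x := by
              rw [Complex.norm_real, Real.norm_eq_abs, abs_of_nonneg (by linarith)]
            rw [this]
            gcongr
            linarith
        _ = a + b * c := by ring
    have hprod : ‖((1 - η x : ℝ) : ℂ) * ψ x‖ = (1 - η x) * b := by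
      rw [norm_mul, Complex.norm_real, Real.norm_eq_abs, abs_of_nonneg (by linarith)]
    have hsq : ‖fderiv ℝ (fun y => ((1 - η y : ℝ) : ℂ) * ψ y) x‖ ^ 2
        ≤ 2 * a ^ 2 + 2 * (b * c) ^ 2 := by
      nlinarith [norm_nonneg (fderiv ℝ (fun y => ((1 - η y : ℝ) : ℂ) * ψ y) x),
        sq_nonneg (a - b * c), mul_nonneg hb hc]
    have e1 : ε ^ 2 / 2 * ‖fderiv ℝ (fun y => ((1 - η y : ℝ) : ℂ) * ψ y) x‖ ^ 2
        ≤ ε ^ 2 / 2 * (2 * a ^ 2 + 2 * (b * c) ^ 2) :=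
      mul_le_mul_of_nonneg_left hsq (by positivity)
    have e2 : 2 * b ^ 2 * (ε ^ 2 / 2 * c ^ 2) ≤ 2 * b ^ 2 * μ x :=
      mul_le_mul_of_nonneg_left hμx (by positivity)
    have ht : (1 - η x) ^ 2 ≤ 1 := by nlinarith
    have e3 : Vp x * ((1 - η x) * b) ^ 2 ≤ Vp x * b ^ 2 := by
      refine mul_le_mul_of_nonneg_left ?_ (hVpos x)
      calc ((1 - η x) * b) ^ 2 = (1 - η x) ^ 2 * b ^ 2 := by ring
        _ ≤ 1 * b ^ 2 := mul_le_mul_of_nonneg_right ht (sq_nonneg b)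
        _ = b ^ 2 := one_mul _
    simp only [hg3, hg1, hg2, hprod]
    linarith [e1, e2, e3, mul_nonneg (hVpos x) (sq_nonneg b)]
  have hI3 : IntegrableOn g3 (Ω \ S) := hint3.mono_set Set.diff_subset
  have hI1 : IntegrableOn g1 (Ω \ S) := hint1.mono_set Set.diff_subset
  have hI2 : IntegrableOn g2 (Ω \ S) := hint2.mono_set Set.diff_subset
  calc (∫ x in Ω, g3 x) = ∫ x in Ω \ S, g3 x := hsplit
    _ ≤ ∫ x in Ω \ S, (2 * g1 x + 2 * g2 x) :=
        setIntegral_mono_on hI3 ((hI1.const_mul 2).add (hI2.const_mul 2)) hdm hpt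
    _ = 2 * (∫ x in Ω \ S, g1 x) + 2 * (∫ x in Ω \ S, g2 x) := by
        rw [integral_add (hI1.const_mul 2) (hI2.const_mul 2),
          integral_const_mul, integral_const_mul]
end
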